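/- arXiv:2407.16134 — 3 statements merged into one kernel-verified Lean document; each statement's English description precedes it below -/
import Mathlib

section
/- Let P = N(μ, Σ₀) and Q = N(α μ, α² Σ₀ + σ² I) be Gaussians on ℝ^m with α² + σ² = 1, 0 < σ ≤ 1, and λ_max(Σ₀) ≤ C_ν for some C_ν ≥ 1. Then the squared 2-Wasserstein distance satisfies W₂²(P, Q) ≤ (1 − α)² ‖μ‖₂² + C_ν² m σ². -/
open Matrix MeasureTheory ProbabilityTheory Finset

/-- The positive semidefinite square root of a positive semidefinite matrix (the definition
that Mathlib had, since removed). -/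
noncomputable def Matrix.PosSemidef.sqrt {n : Type*} [Fintype n] [DecidableEq n]
    {A : Matrix n n ℝ} (hA : A.PosSemidef) : Matrix n n ℝ :=
  hA.1.eigenvectorUnitary * diagonal ((√·) ∘ hA.1.eigenvalues) *
    (star hA.1.eigenvectorUnitary : Matrix n n ℝ)

/-- Product of `m` i.i.d. standard real Gaussians: the standard Gaussian on `ℝ^m`. -/
noncomputable def stdGaussianPi (m : ℕ) : Measure (Fin m → ℝ) :=
  Measure.pi fun _ => gaussianReal 0 1

/-- The multivariate Gaussian `N(μ, S)` on `ℝ^m`, realized as the law of `μ + S^{1/2} Z`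
for a standard Gaussian `Z`. -/
noncomputable def mvGaussian {m : ℕ} (μ : Fin m → ℝ) {S : Matrix (Fin m) (Fin m) ℝ}
    (hS : S.PosSemidef) : Measure (Fin m → ℝ) :=
  (stdGaussianPi m).map fun z => μ + hS.sqrt.mulVec z

/-- Squared 2-Wasserstein distance, as the infimum of expected squared Euclidean cost
over couplings of `P` and `Q`. -/
noncomputable def W2sq {m : ℕ} (P Q : Measure (Fin m → ℝ)) : ℝ :=
  sInf {c : ℝ | ∃ π : Measure ((Fin m → ℝ) × (Fin m → ℝ)),
    IsProbabilityMeasure π ∧ π.map Prod.fst = P ∧ π.map Prod.snd = Q ∧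
    c = ∫ q, (q.1 - q.2) ⬝ᵥ (q.1 - q.2) ∂π}

/-! Couple `P` and `Q` synchronously, as the laws of `μ + Σ₀^{1/2} Z` and
`αμ + (α²Σ₀ + σ²I)^{1/2} Z` for one standard Gaussian `Z`. Both square roots are functions of
`Σ₀`, so their difference is `f(Σ₀)` with `f x = √x - √(α²x + σ²)`, and the cost of this coupling
is `(1 - α)²‖μ‖² + ∑ᵢ f(λᵢ)²`. Each term is at most `|λᵢ - (α²λᵢ + σ²)| = σ²|λᵢ - 1| ≤ C_ν σ²`,
since `(√x - √y)² ≤ |√x - √y| (√x + √y) = |x - y|`. -/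

lemma Real.sq_sqrt_sub_sqrt_le_abs_sub {x y : ℝ} (hx : 0 ≤ x) (hy : 0 ≤ y) :
    (√x - √y) ^ 2 ≤ |x - y| :=
  calc (√x - √y) ^ 2 = |√x - √y| * |√x - √y| := by rw [sq, abs_mul_abs_self]
    _ ≤ |√x - √y| * (√x + √y) := by
        gcongr
        exact abs_sub_le_iff.2 ⟨by linarith [Real.sqrt_nonneg y], by linarith [Real.sqrt_nonneg x]⟩
    _ = |x - y| := by
        rw [← abs_of_nonneg (by positivity : 0 ≤ √x + √y), ← abs_mul, mul_comm, ← sq_sub_sq,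
          Real.sq_sqrt hx, Real.sq_sqrt hy]

lemma sq_sqrt_sub_sqrt_sq_mul_add_sq_le {α σ C x : ℝ} (h1 : α ^ 2 + σ ^ 2 = 1) (hC : 1 ≤ C)
    (hx0 : 0 ≤ x) (hxC : x ≤ C) : (√x - √(α ^ 2 * x + σ ^ 2)) ^ 2 ≤ C ^ 2 * σ ^ 2 :=
  calc (√x - √(α ^ 2 * x + σ ^ 2)) ^ 2 ≤ |x - (α ^ 2 * x + σ ^ 2)| :=
        Real.sq_sqrt_sub_sqrt_le_abs_sub hx0 (by positivity)
    _ = σ ^ 2 * |x - 1| := by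
        rw [show x - (α ^ 2 * x + σ ^ 2) = σ ^ 2 * (x - 1) by linear_combination (-x) * h1,
          abs_mul, abs_sq]
    _ ≤ σ ^ 2 * C := by gcongr; exact abs_le.2 ⟨by linarith, by linarith⟩
    _ ≤ C ^ 2 * σ ^ 2 := by
        nlinarith [mul_nonneg (mul_nonneg (sq_nonneg σ) (by linarith : 0 ≤ C)) (sub_nonneg.2 hC)]

namespace Matrix.IsHermitian
variable {n : Type*} [Fintype n] [DecidableEq n] {A : Matrix n n ℝ}

lemma trace_cfc (hA : A.IsHermitian) (f : ℝ → ℝ) :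
    (cfc f A).trace = ∑ i, f (hA.eigenvalues i) := by
  rw [hA.cfc_eq, IsHermitian.cfc, Unitary.conjStarAlgAut_apply, trace_mul_cycle,
    Unitary.coe_star_mul_self, Matrix.one_mul, trace_diagonal]
  rfl

lemma trace_cfc_mul_transpose (hA : A.IsHermitian) (f : ℝ → ℝ) :
    (cfc f A * (cfc f A)ᵀ).trace = ∑ i, f (hA.eigenvalues i) ^ 2 := by
  have hf : ContinuousOn f (spectrum ℝ A) :=
    (hA.spectrum_real_eq_range_eigenvalues ▸ Set.finite_range _).continuousOn _
  have hsymm : (cfc f A)ᵀ = cfc f A := by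
    simpa [IsSelfAdjoint, star_eq_conjTranspose] using (cfc_predicate f A)
  rw [hsymm, ← cfc_mul f f A, hA.trace_cfc]
  simp [sq]

lemma eigenvalues_le {c : ℝ} (hA : A.IsHermitian) (h : ∀ x, x ⬝ᵥ A *ᵥ x ≤ c * (x ⬝ᵥ x))
    (i : n) : hA.eigenvalues i ≤ c := by
  have hv : (⇑(hA.eigenvectorBasis i) : n → ℝ) ⬝ᵥ ⇑(hA.eigenvectorBasis i) = 1 := by
    have := real_inner_self_eq_norm_sq (hA.eigenvectorBasis i)
    rw [hA.eigenvectorBasis.orthonormal.1 i, EuclideanSpace.inner_eq_star_dotProduct] at this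
    simpa using this
  simpa [hA.eigenvalues_eq i, hv] using h (hA.eigenvectorBasis i)

end Matrix.IsHermitian

namespace Matrix.PosSemidef
variable {n : Type*} [Fintype n] [DecidableEq n] {A : Matrix n n ℝ}

lemma sqrt_eq_cfc (hA : A.PosSemidef) : hA.sqrt = cfc Real.sqrt A := by
  rw [hA.1.cfc_eq]; rfl

lemma sqrt_smul_add_smul_one_eq_cfc (hA : A.IsHermitian) {a b : ℝ}
    (h : (a • A + b • 1).PosSemidef) : h.sqrt = cfc (fun x => √(a * x + b)) A := by
  have haffine : a • A + b • 1 = cfc (fun x => a * x + b) A := by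
    rw [cfc_add_const b (fun x => a * x) A, cfc_const_mul_id a A, Algebra.algebraMap_eq_smul_one]
  rw [h.sqrt_eq_cfc, haffine, ← cfc_comp Real.sqrt _ A]
  rfl

end Matrix.PosSemidef

section StandardGaussian
variable {ι : Type*} [Fintype ι]

lemma memLp_two_dotProduct_pi_gaussianReal (a : ι → ℝ) :
    MemLp (fun z => a ⬝ᵥ z) 2 (Measure.pi fun _ : ι => gaussianReal 0 1) := by
  simp only [dotProduct]
  exact memLp_finsetSum _ fun i _ =>
    (((memLp_id_gaussianReal 2).const_mul (a i)).comp_measurePreserving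
      (measurePreserving_eval _ i))

lemma integral_dotProduct_pi_gaussianReal (a : ι → ℝ) :
    ∫ z, a ⬝ᵥ z ∂(Measure.pi fun _ : ι => gaussianReal 0 1) = 0 := by
  simp only [dotProduct]
  rw [integral_finsetSum _ fun i _ => (integrable_eval IsGaussian.integrable_id).const_mul _]
  simp [integral_const_mul, integral_eval, integral_id_gaussianReal]

lemma variance_dotProduct_pi_gaussianReal (a : ι → ℝ) :
    Var[fun z => a ⬝ᵥ z; Measure.pi fun _ : ι => gaussianReal 0 1] = a ⬝ᵥ a := by
  have hsum : (fun z : ι → ℝ => a ⬝ᵥ z) = ∑ i, fun z => (fun x => a i * x) (z i) := by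
    ext z; simp [dotProduct]
  rw [hsum, variance_sum_pi (X := fun i x => a i * x)
    fun i => (memLp_id_gaussianReal 2).const_mul (a i)]
  refine Finset.sum_congr rfl fun i _ => ?_
  calc Var[fun x => a i * x; gaussianReal 0 1] = a i ^ 2 * Var[id; gaussianReal 0 1] :=
        variance_const_mul (a i) id _
    _ = a i * a i := by rw [variance_id_gaussianReal]; simp [sq]

lemma integral_sq_dotProduct_add_pi_gaussianReal (a : ι → ℝ) (b : ℝ) :
    ∫ z, (a ⬝ᵥ z + b) ^ 2 ∂(Measure.pi fun _ : ι => gaussianReal 0 1) = a ⬝ᵥ a + b ^ 2 := by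
  have hX : MemLp (fun z => a ⬝ᵥ z + b) 2 (Measure.pi fun _ : ι => gaussianReal 0 1) :=
    (memLp_two_dotProduct_pi_gaussianReal a).add (memLp_const b)
  have hvar := variance_eq_sub hX
  rw [variance_add_const (memLp_two_dotProduct_pi_gaussianReal a).aestronglyMeasurable,
    variance_dotProduct_pi_gaussianReal] at hvar
  have hmean : ∫ z, (a ⬝ᵥ z + b) ∂(Measure.pi fun _ : ι => gaussianReal 0 1) = b := by
    rw [integral_add ((memLp_two_dotProduct_pi_gaussianReal a).integrable one_le_two)
      (integrable_const b), integral_dotProduct_pi_gaussianReal]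
    simp
  simp only [Pi.pow_apply] at hvar
  rw [hmean] at hvar
  linarith

lemma integral_mulVec_add_dotProduct_self_pi_gaussianReal {κ : Type*} [Fintype κ]
    (M : Matrix κ ι ℝ) (c : κ → ℝ) :
    ∫ z, (M *ᵥ z + c) ⬝ᵥ (M *ᵥ z + c) ∂(Measure.pi fun _ : ι => gaussianReal 0 1)
      = (M * Mᵀ).trace + c ⬝ᵥ c := by
  have hrows : ∀ z : ι → ℝ,
      (M *ᵥ z + c) ⬝ᵥ (M *ᵥ z + c) = ∑ k, ((fun j => M k j) ⬝ᵥ z + c k) ^ 2 :=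
    fun z => by simp only [dotProduct, Pi.add_apply, mulVec, sq]
  have hrow_memLp : ∀ k, MemLp (fun z => (fun j => M k j) ⬝ᵥ z + c k) 2
      (Measure.pi fun _ : ι => gaussianReal 0 1) := fun k =>
    (memLp_two_dotProduct_pi_gaussianReal _).add (memLp_const (c k))
  simp_rw [hrows]
  rw [integral_finsetSum _ fun k _ => (hrow_memLp k).integrable_sq]
  simp_rw [integral_sq_dotProduct_add_pi_gaussianReal, Finset.sum_add_distrib]
  simp [trace, mul_apply, dotProduct, sq]

end StandardGaussian

instance isProbabilityMeasure_stdGaussianPi (m : ℕ) :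
    IsProbabilityMeasure (stdGaussianPi m) := by
  unfold stdGaussianPi; infer_instance

lemma W2sq_map_le {m : ℕ} {Ω : Type*} [MeasurableSpace Ω] (ν : Measure Ω)
    [IsProbabilityMeasure ν] {f g : Ω → Fin m → ℝ} (hf : Measurable f) (hg : Measurable g) :
    W2sq (ν.map f) (ν.map g) ≤ ∫ ω, (f ω - g ω) ⬝ᵥ (f ω - g ω) ∂ν := by
  have hfg : Measurable fun ω => (f ω, g ω) := hf.prodMk hg
  refine csInf_le ⟨0, ?_⟩ ⟨ν.map fun ω => (f ω, g ω),
    Measure.isProbabilityMeasure_map hfg.aemeasurable, ?_, ?_, ?_⟩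
  · rintro c ⟨π, -, -, -, rfl⟩
    exact integral_nonneg fun q => Finset.sum_nonneg fun i _ => mul_self_nonneg _
  · rw [Measure.map_map measurable_fst hfg]; rfl
  · rw [Measure.map_map measurable_snd hfg]; rfl
  · have hcost : Continuous fun q : (Fin m → ℝ) × (Fin m → ℝ) => (q.1 - q.2) ⬝ᵥ (q.1 - q.2) := by
      fun_prop
    rw [integral_map hfg.aemeasurable hcost.aestronglyMeasurable]

theorem gaussian_W2_bound_general {m : ℕ} (μ : Fin m → ℝ) (S₀ : Matrix (Fin m) (Fin m) ℝ)
    (hpsd : S₀.PosSemidef)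
    (α σ Cν : ℝ) (h1 : α ^ 2 + σ ^ 2 = 1) (hC : 1 ≤ Cν)
    (hmax : ∀ x : Fin m → ℝ, x ⬝ᵥ S₀.mulVec x ≤ Cν * (x ⬝ᵥ x))
    (hQ : (α ^ 2 • S₀ + σ ^ 2 • (1 : Matrix (Fin m) (Fin m) ℝ)).PosSemidef) :
    W2sq (mvGaussian μ hpsd) (mvGaussian (α • μ) hQ)
      ≤ (1 - α) ^ 2 * (μ ⬝ᵥ μ) + Cν ^ 2 * m * σ ^ 2 := by
  set f : ℝ → ℝ := fun x => √x - √(α ^ 2 * x + σ ^ 2)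
  have hdiff : hpsd.sqrt - hQ.sqrt = cfc f S₀ := by
    rw [hpsd.sqrt_eq_cfc, PosSemidef.sqrt_smul_add_smul_one_eq_cfc hpsd.1,
      ← cfc_sub _ _ S₀ (by fun_prop) (by fun_prop)]
  have hcost : ∀ z,
      (μ + hpsd.sqrt *ᵥ z) - (α • μ + hQ.sqrt *ᵥ z) = cfc f S₀ *ᵥ z + (1 - α) • μ :=
    fun z => by rw [← hdiff, sub_mulVec, sub_smul, one_smul]; abel
  calc W2sq (mvGaussian μ hpsd) (mvGaussian (α • μ) hQ)
      ≤ ∫ z, (cfc f S₀ *ᵥ z + (1 - α) • μ) ⬝ᵥ (cfc f S₀ *ᵥ z + (1 - α) • μ)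
          ∂stdGaussianPi m := by
        simp_rw [← hcost]; exact W2sq_map_le _ (by fun_prop) (by fun_prop)
    _ = ∑ i, f (hpsd.1.eigenvalues i) ^ 2 + (1 - α) ^ 2 * (μ ⬝ᵥ μ) := by
        rw [stdGaussianPi, integral_mulVec_add_dotProduct_self_pi_gaussianReal,
          hpsd.1.trace_cfc_mul_transpose, smul_dotProduct, dotProduct_smul, smul_eq_mul,
          smul_eq_mul, ← mul_assoc, ← sq]
    _ ≤ ∑ _i : Fin m, Cν ^ 2 * σ ^ 2 + (1 - α) ^ 2 * (μ ⬝ᵥ μ) := by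
        gcongr with i
        exact sq_sqrt_sub_sqrt_sq_mul_add_sq_le h1 hC (hpsd.eigenvalues_nonneg i)
          (hpsd.1.eigenvalues_le hmax i)
    _ = (1 - α) ^ 2 * (μ ⬝ᵥ μ) + Cν ^ 2 * m * σ ^ 2 := by simp; ring

/-- Wasserstein bound between a Gaussian and its Ornstein–Uhlenbeck
perturbation: for `P = N(μ, Σ₀)` and `Q = N(αμ, α²Σ₀ + σ²I)` with `α² + σ² = 1`,
`0 < σ ≤ 1`, and `λ_max(Σ₀) ≤ C_ν` with `C_ν ≥ 1`,
`W₂²(P, Q) ≤ (1 - α)² ‖μ‖₂² + C_ν² m σ²`. -/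
theorem gaussian_W2_bound {m : ℕ} (μ : Fin m → ℝ) (S₀ : Matrix (Fin m) (Fin m) ℝ)
    (hsym : S₀.IsSymm) (hpsd : S₀.PosSemidef)
    (α σ Cν : ℝ) (h1 : α ^ 2 + σ ^ 2 = 1) (hσ0 : 0 < σ) (hσ1 : σ ≤ 1) (hC : 1 ≤ Cν)
    (hmax : ∀ x : Fin m → ℝ, x ⬝ᵥ S₀.mulVec x ≤ Cν * (x ⬝ᵥ x))
    (hQ : (α ^ 2 • S₀ + σ ^ 2 • (1 : Matrix (Fin m) (Fin m) ℝ)).PosSemidef) :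
    W2sq (mvGaussian μ hpsd) (mvGaussian (α • μ) hQ)
      ≤ (1 - α) ^ 2 * (μ ⬝ᵥ μ) + Cν ^ 2 * m * σ ^ 2 :=
  gaussian_W2_bound_general μ S₀ hpsd α σ Cν h1 hC hmax hQ
end

section
/- The softmax map σ: ℝ^d → ℝ^d, σ(x)_i = e^{x_i} / Σ_j e^{x_j}, is 1-Lipschitz with respect to the Euclidean norm; i.e. ‖σ(x) − σ(y)‖₂ ≤ ‖x − y‖₂ for all x, y ∈ ℝ^d. -/
open Matrix Finset

/-- Euclidean norm of a vector in `ℝ^d`. -/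
noncomputable def l2norm {d : ℕ} (v : Fin d → ℝ) : ℝ := Real.sqrt (v ⬝ᵥ v)

/-- The softmax map on `ℝ^d`. -/
noncomputable def softmax {d : ℕ} (x : Fin d → ℝ) : Fin d → ℝ :=
  fun i => Real.exp (x i) / ∑ j, Real.exp (x j)

/-!
The Jacobian of softmax at `x` is `Diag p - p pᵀ` with `p = softmax x`: it sends `v` to
`(p i * (v i - m))ᵢ`, where `m = ∑ j, p j * v j` is the `p`-mean of `v`. Since `p i ≤ 1`,
its squared norm is at most the `p`-variance `∑ i, p i * (v i - m) ^ 2 ≤ ∑ i, p i * v i ^ 2 ≤ ‖v‖²`,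
so the Jacobian has operator norm at most `1` and the mean value inequality concludes.
-/

theorem l2norm_eq_norm_toLp {d : ℕ} (v : Fin d → ℝ) : l2norm v = ‖WithLp.toLp 2 v‖ := by
  simp [l2norm, EuclideanSpace.norm_eq, dotProduct, sq]

theorem l2norm_sub_le_of_hasFDerivAt {d e : ℕ} {f : (Fin d → ℝ) → Fin e → ℝ}
    {f' : (Fin d → ℝ) → (Fin d → ℝ) →L[ℝ] (Fin e → ℝ)} {C : ℝ} (hC : 0 ≤ C)
    (hf : ∀ z, HasFDerivAt f (f' z) z) (hf' : ∀ z v, l2norm (f' z v) ≤ C * l2norm v)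
    (x y : Fin d → ℝ) : l2norm (f x - f y) ≤ C * l2norm (x - y) := by
  set E := EuclideanSpace.equiv (Fin d) ℝ
  set F := EuclideanSpace.equiv (Fin e) ℝ
  set g' : EuclideanSpace ℝ (Fin d) → EuclideanSpace ℝ (Fin d) →L[ℝ] EuclideanSpace ℝ (Fin e) :=
    fun z => (F.symm : (Fin e → ℝ) →L[ℝ] _).comp ((f' (E z)).comp (E : _ →L[ℝ] (Fin d → ℝ)))
  have hg : ∀ z, HasFDerivAt (F.symm ∘ f ∘ E) (g' z) z := fun z =>
    F.symm.hasFDerivAt.comp z ((hf (E z)).comp z E.hasFDerivAt)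
  have hg' : ∀ z, ‖g' z‖ ≤ C := fun z =>
    ContinuousLinearMap.opNorm_le_bound _ hC fun v => by
      simpa [g', E, F, l2norm_eq_norm_toLp, PiLp.coe_continuousLinearEquiv,
        PiLp.coe_symm_continuousLinearEquiv] using hf' (E z) (E v)
  have := Convex.norm_image_sub_le_of_norm_hasFDerivWithin_le
    (fun z _ => (hg z).hasFDerivWithinAt) (fun z _ => hg' z) convex_univ
    (Set.mem_univ (E.symm y)) (Set.mem_univ (E.symm x))
  simpa [E, F, l2norm_eq_norm_toLp, PiLp.coe_continuousLinearEquiv,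
    PiLp.coe_symm_continuousLinearEquiv] using this

theorem sum_sq_mul_sub_weightedMean_le {ι : Type*} [Fintype ι] (p v : ι → ℝ)
    (hp : ∀ i, 0 ≤ p i) (hp_sum : ∑ i, p i ≤ 1) :
    ∑ i, (p i * (v i - ∑ j, p j * v j)) ^ 2 ≤ ∑ i, v i ^ 2 := by
  set m := ∑ j, p j * v j
  have hp_le_one : ∀ i, p i ≤ 1 := fun i =>
    (single_le_sum (fun j _ => hp j) (mem_univ i)).trans hp_sum
  calc ∑ i, (p i * (v i - m)) ^ 2 ≤ ∑ i, p i * (v i - m) ^ 2 := by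
        gcongr with i
        rw [mul_pow]
        gcongr
        nlinarith [hp i, hp_le_one i]
    _ = ∑ i, p i * v i ^ 2 - 2 * m * m + m ^ 2 * ∑ i, p i := by
        have expand : ∀ i,
            p i * (v i - m) ^ 2 = p i * v i ^ 2 - 2 * m * (p i * v i) + m ^ 2 * p i :=
          fun i => by ring
        simp only [expand, sum_add_distrib, sum_sub_distrib, ← mul_sum, m]
    _ ≤ ∑ i, p i * v i ^ 2 := by nlinarith [sq_nonneg m]
    _ ≤ ∑ i, v i ^ 2 := by
        gcongr with i
        nlinarith [hp i, hp_le_one i, sq_nonneg (v i)]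

section Softmax

variable {d : ℕ}

theorem softmax_nonneg (x : Fin d → ℝ) (i : Fin d) : 0 ≤ softmax x i := by
  unfold softmax; positivity

-- `= 1` fails only for `d = 0`, where the sum is empty.
theorem sum_softmax_le_one (x : Fin d → ℝ) : ∑ i, softmax x i ≤ 1 := by
  simp only [softmax, ← sum_div]
  exact div_self_le_one _

noncomputable def softmaxJacobian (x : Fin d → ℝ) : (Fin d → ℝ) →L[ℝ] (Fin d → ℝ) :=
  .pi fun i => softmax x i • (.proj i - ∑ j, softmax x j • .proj j)

theorem softmaxJacobian_apply (x v : Fin d → ℝ) (i : Fin d) :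
    softmaxJacobian x v i = softmax x i * (v i - ∑ j, softmax x j * v j) := by
  simp [softmaxJacobian]

theorem hasFDerivAt_softmax (x : Fin d → ℝ) : HasFDerivAt softmax (softmaxJacobian x) x := by
  refine hasFDerivAt_pi'' fun i => ?_
  have hS : HasFDerivAt (fun y : Fin d → ℝ => ∑ j, Real.exp (y j))
      (∑ j, Real.exp (x j) • ContinuousLinearMap.proj j) x :=
    HasFDerivAt.fun_sum fun j _ => (hasFDerivAt_apply j x).exp
  have hS_pos : 0 < ∑ j, Real.exp (x j) :=
    sum_pos (fun j _ => Real.exp_pos _) ⟨i, mem_univ i⟩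
  have h : HasFDerivAt (fun y => softmax y i) _ x := (hasFDerivAt_apply i x).exp.mul
    ((hasDerivAt_inv hS_pos.ne').comp_hasFDerivAt x hS)
  refine h.congr_fderiv (ContinuousLinearMap.ext fun v => ?_)
  simp [softmaxJacobian_apply, softmax, div_mul_eq_mul_div, ← sum_div]
  field_simp
  ring

theorem l2norm_softmaxJacobian_apply_le (x v : Fin d → ℝ) :
    l2norm (softmaxJacobian x v) ≤ l2norm v := by
  unfold l2norm dotProduct
  simp only [← sq, softmaxJacobian_apply]
  exact Real.sqrt_le_sqrt <|
    sum_sq_mul_sub_weightedMean_le _ v (softmax_nonneg x) (sum_softmax_le_one x)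

end Softmax

/-- Softmax is 1-Lipschitz with respect to the Euclidean norm. -/
theorem softmax_one_lipschitz {d : ℕ} (x y : Fin d → ℝ) :
    l2norm (softmax x - softmax y) ≤ l2norm (x - y) := by
  simpa using l2norm_sub_le_of_hasFDerivAt zero_le_one hasFDerivAt_softmax
    (fun z v => by simpa using l2norm_softmaxJacobian_apply_le z v) x y
end

section
/- For every B ≥ 1 and ε ∈ (0,1), there exists a ReLU network R: [−B,B]² → ℝ with depth O(log(B/ε)), width at most 4 per layer (with residual connections of inner dimension 3), and weight magnitudes O(B), such that |R(x, y) − x·y| ≤ ε for all x, y ∈ [−B, B]. -/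
open Matrix

def reluV {n : ℕ} (v : Fin n → ℝ) : Fin n → ℝ := fun i => max (v i) 0

def resBlock (W₁ : Matrix (Fin 4) (Fin 3) ℝ) (W₂ : Matrix (Fin 3) (Fin 4) ℝ)
    (b₁ : Fin 3 → ℝ) (b₂ : Fin 4 → ℝ) (y : Fin 3 → ℝ) : Fin 3 → ℝ :=
  y + W₂.mulVec (reluV (W₁.mulVec y + b₂)) + b₁

def resIter (W₁ : ℕ → Matrix (Fin 4) (Fin 3) ℝ) (W₂ : ℕ → Matrix (Fin 3) (Fin 4) ℝ)
    (b₁ : ℕ → Fin 3 → ℝ) (b₂ : ℕ → Fin 4 → ℝ) : ℕ → (Fin 3 → ℝ) → (Fin 3 → ℝ)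
  | 0 => id
  | L + 1 => resBlock (W₁ L) (W₂ L) (b₁ L) (b₂ L) ∘ resIter W₁ W₂ b₁ b₂ L

/-!
Yarotsky's construction. On `[0,1]` the hat map satisfies
`t - t² = hat t / 4 + (hat t - (hat t)²) / 4`, so `sqApprox m t = ∑_{k=1}^m hat^[k] t / 4^k`
approximates `t - t²` with error `(s - s²) / 4^m ∈ [0, 4^{-(m+1)}]`, where `s = hat^[m] t`. With
`u, v = (x ± y) / (4B) + 1/2 ∈ [0,1]`, polarization gives `xy = 4B² ((v - v²) - (u - u²))`, so
the same sums approximate `xy` to within `B² / 4^m`. A residual network computes them with one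
block per iteration of `hat`, and `m ≈ 2 log (B/ε)` iterations suffice.
-/

namespace Yarotsky

open Set

noncomputable def hat (t : ℝ) : ℝ := 2 * max t 0 - 4 * max (t - 1 / 2) 0

lemma hat_of_nonneg {t : ℝ} (ht : 0 ≤ t) : hat t = 2 * t - 4 * max (t - 1 / 2) 0 := by
  rw [hat, max_eq_left ht]

lemma hat_mapsTo : MapsTo hat (Icc 0 1) (Icc 0 1) := by
  rintro t ⟨h0, h1⟩
  rw [hat_of_nonneg h0]
  rcases le_total t (1 / 2) with h | h
  · rw [max_eq_right (by linarith)]; constructor <;> linarith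
  · rw [max_eq_left (by linarith)]; constructor <;> linarith

lemma sub_sq_eq_hat {t : ℝ} (ht : t ∈ Icc (0 : ℝ) 1) :
    t - t ^ 2 = hat t / 4 + (hat t - hat t ^ 2) / 4 := by
  rw [hat_of_nonneg ht.1]
  rcases le_total t (1 / 2) with h | h
  · rw [max_eq_right (by linarith)]; ring
  · rw [max_eq_left (by linarith)]; ring

noncomputable def sqApprox (m : ℕ) (t : ℝ) : ℝ :=
  ∑ k ∈ Finset.range m, hat^[k + 1] t / 4 ^ (k + 1)

lemma sub_sq_sub_sqApprox {t : ℝ} (ht : t ∈ Icc (0 : ℝ) 1) (m : ℕ) :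
    t - t ^ 2 - sqApprox m t = (hat^[m] t - (hat^[m] t) ^ 2) / 4 ^ m := by
  induction m with
  | zero => simp [sqApprox]
  | succ m ih =>
    have key := sub_sq_eq_hat (hat_mapsTo.iterate m ht)
    rw [sqApprox, Finset.sum_range_succ, ← sqApprox, Function.iterate_succ_apply', ← sub_sub, ih,
      key, pow_succ]
    ring

lemma sub_sq_sub_sqApprox_mem {t : ℝ} (ht : t ∈ Icc (0 : ℝ) 1) (m : ℕ) :
    t - t ^ 2 - sqApprox m t ∈ Icc 0 (1 / 4 ^ (m + 1)) := by
  obtain ⟨h0, h1⟩ := hat_mapsTo.iterate m ht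
  rw [sub_sq_sub_sqApprox ht, pow_succ', ← div_div]
  constructor
  · apply div_nonneg (by nlinarith) (by positivity)
  · gcongr; nlinarith [sq_nonneg (hat^[m] t - 1 / 2)]

-- Block `0` only adds the shift `(1/2, 1/2, 0)`, which the bias-free input layer cannot.
def productNetW₁ (k : ℕ) : Matrix (Fin 4) (Fin 3) ℝ :=
  if k = 0 then 0 else !![1, 0, 0; 1, 0, 0; 0, 1, 0; 0, 1, 0]

noncomputable def productNetW₂ (B : ℝ) (k : ℕ) : Matrix (Fin 3) (Fin 4) ℝ :=
  if k = 0 then 0 else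
    !![1, -4, 0, 0; 0, 0, 1, -4; 8 * B / 4 ^ k, -16 * B / 4 ^ k, -8 * B / 4 ^ k, 16 * B / 4 ^ k]

noncomputable def productNetb₁ (k : ℕ) : Fin 3 → ℝ := if k = 0 then ![1 / 2, 1 / 2, 0] else 0

noncomputable def productNetb₂ (k : ℕ) : Fin 4 → ℝ := if k = 0 then 0 else ![0, -1 / 2, 0, -1 / 2]

noncomputable def productNetIn (B : ℝ) : Matrix (Fin 3) (Fin 2) ℝ :=
  !![1 / (4 * B), 1 / (4 * B); 1 / (4 * B), -(1 / (4 * B)); 0, 0]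

def productNetOut (B : ℝ) : Matrix (Fin 1) (Fin 3) ℝ := !![0, 0, -B]

lemma resBlock_productNet_zero (B : ℝ) (v : Fin 3 → ℝ) :
    resBlock (productNetW₁ 0) (productNetW₂ B 0) (productNetb₁ 0) (productNetb₂ 0) v =
      v + ![1 / 2, 1 / 2, 0] := by
  simp [resBlock, productNetW₁, productNetW₂, productNetb₁]

lemma resBlock_productNet_succ (B : ℝ) (k : ℕ) {a b : ℝ} (ha : 0 ≤ a) (hb : 0 ≤ b) (c : ℝ) :
    resBlock (productNetW₁ (k + 1)) (productNetW₂ B (k + 1)) (productNetb₁ (k + 1))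
        (productNetb₂ (k + 1)) ![a, b, c] =
      ![hat a, hat b, c + 4 * B * (hat a - hat b) / 4 ^ (k + 1)] := by
  ext i
  fin_cases i <;>
  · simp [resBlock, productNetW₁, productNetW₂, productNetb₁, productNetb₂, reluV,
      dotProduct, Fin.sum_univ_succ, vecHead, vecTail, hat_of_nonneg ha, hat_of_nonneg hb,
      max_eq_left ha, max_eq_left hb]
    ring_nf

lemma resIter_productNet (B : ℝ) {u v : ℝ} (hu : u ∈ Icc (0 : ℝ) 1) (hv : v ∈ Icc (0 : ℝ) 1)
    (m : ℕ) :
    resIter productNetW₁ (productNetW₂ B) productNetb₁ productNetb₂ (m + 1)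
        ![u - 1 / 2, v - 1 / 2, 0] =
      ![hat^[m] u, hat^[m] v, 4 * B * (sqApprox m u - sqApprox m v)] := by
  induction m with
  | zero =>
    rw [resIter, resIter, Function.comp_apply, id, resBlock_productNet_zero]
    ext i; fin_cases i <;> simp [sqApprox]
  | succ m ih =>
    rw [resIter, Function.comp_apply, ih,
      resBlock_productNet_succ B m (hat_mapsTo.iterate m hu).1 (hat_mapsTo.iterate m hv).1]
    ext i
    fin_cases i <;> simp [← Function.iterate_succ_apply' hat, sqApprox, Finset.sum_range_succ]
    ring

lemma productNetIn_mulVec (B x y : ℝ) :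
    (productNetIn B).mulVec ![x, y] = ![(x + y) / (4 * B), (x - y) / (4 * B), 0] := by
  ext i
  fin_cases i <;> simp [productNetIn, mulVec, dotProduct, Fin.sum_univ_succ] <;> ring

lemma productNetOut_mulVec (B a b c : ℝ) : (productNetOut B).mulVec ![a, b, c] 0 = -B * c := by
  simp [productNetOut, mulVec, dotProduct, Fin.sum_univ_succ]

lemma div_add_half_mem_Icc {s B : ℝ} (hB : 0 < B) (hs : |s| ≤ 2 * B) :
    s / (4 * B) + 1 / 2 ∈ Icc (0 : ℝ) 1 := by
  obtain ⟨h₁, h₂⟩ := abs_le.mp hs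
  have h : |s / (4 * B)| ≤ 1 / 2 := by
    rw [abs_div, abs_of_pos (by positivity : (0 : ℝ) < 4 * B), div_le_iff₀ (by positivity)]
    linarith
  obtain ⟨h₃, h₄⟩ := abs_le.mp h
  constructor <;> linarith

lemma abs_productNet_sub_mul_le {B x y : ℝ} (hB : 0 < B) (hx : |x| ≤ B) (hy : |y| ≤ B) (m : ℕ) :
    |(productNetOut B).mulVec (resIter productNetW₁ (productNetW₂ B) productNetb₁ productNetb₂
        (m + 1) ((productNetIn B).mulVec ![x, y])) 0 - x * y| ≤ B ^ 2 / 4 ^ m := by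
  set u := (x + y) / (4 * B) + 1 / 2
  set v := (x - y) / (4 * B) + 1 / 2
  have hu : u ∈ Icc (0 : ℝ) 1 :=
    div_add_half_mem_Icc hB ((abs_add_le x y).trans (by linarith))
  have hv : v ∈ Icc (0 : ℝ) 1 :=
    div_add_half_mem_Icc hB ((abs_sub x y).trans (by linarith))
  have hinput : (productNetIn B).mulVec ![x, y] = ![u - 1 / 2, v - 1 / 2, 0] := by
    rw [productNetIn_mulVec]; simp [u, v]
  have hpolar : (productNetOut B).mulVec ![hat^[m] u, hat^[m] v,
      4 * B * (sqApprox m u - sqApprox m v)] 0 - x * y =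
      4 * B ^ 2 * ((u - u ^ 2 - sqApprox m u) - (v - v ^ 2 - sqApprox m v)) := by
    rw [productNetOut_mulVec]
    simp only [u, v]
    field_simp
    ring
  obtain ⟨hu₀, hu₁⟩ := sub_sq_sub_sqApprox_mem hu m
  obtain ⟨hv₀, hv₁⟩ := sub_sq_sub_sqApprox_mem hv m
  rw [hinput, resIter_productNet B hu hv, hpolar, abs_mul, abs_of_pos (by positivity)]
  calc 4 * B ^ 2 * |(u - u ^ 2 - sqApprox m u) - (v - v ^ 2 - sqApprox m v)|
      ≤ 4 * B ^ 2 * (1 / 4 ^ (m + 1)) := by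
        gcongr; exact abs_sub_le_of_nonneg_of_le hu₀ hu₁ hv₀ hv₁
    _ = B ^ 2 / 4 ^ m := by field_simp; ring

lemma abs_productNetW₁_le (k : ℕ) (i : Fin 4) (j : Fin 3) : |productNetW₁ k i j| ≤ 1 := by
  unfold productNetW₁
  split_ifs
  · simp
  · fin_cases i <;> fin_cases j <;> simp

lemma abs_productNetW₂_le {B : ℝ} (hB : 1 / 4 ≤ B) (k : ℕ) (i : Fin 3) (j : Fin 4) :
    |productNetW₂ B k i j| ≤ 16 * B := by
  have hscaled {c : ℝ} (hc : |c| ≤ 16) : |c * B / 4 ^ k| ≤ 16 * B := by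
    rw [abs_div, abs_mul, abs_of_nonneg (by linarith : 0 ≤ B),
      abs_of_pos (by positivity : (0 : ℝ) < 4 ^ k)]
    exact div_le_of_le_mul₀ (by positivity) (by positivity)
      (by nlinarith [one_le_pow₀ (M₀ := ℝ) (a := 4) (by norm_num) (n := k), abs_nonneg c])
  unfold productNetW₂
  split_ifs
  · simp; positivity
  · fin_cases i <;> fin_cases j <;> simp [neg_div] <;>
      first | linarith | exact hscaled (by norm_num)

lemma abs_productNetb₁_le (k : ℕ) (i : Fin 3) : |productNetb₁ k i| ≤ 1 := by
  unfold productNetb₁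
  split_ifs
  · fin_cases i <;> norm_num [abs_of_pos]
  · simp

lemma abs_productNetb₂_le (k : ℕ) (i : Fin 4) : |productNetb₂ k i| ≤ 1 := by
  unfold productNetb₂
  split_ifs
  · simp
  · fin_cases i <;> norm_num [abs_div]

lemma abs_productNetIn_le {B : ℝ} (hB : 1 / 4 ≤ B) (i : Fin 3) (j : Fin 2) :
    |productNetIn B i j| ≤ 1 := by
  have h : |1 / (4 * B)| ≤ 1 := by
    rw [abs_of_pos (by positivity), div_le_one (by positivity)]
    linarith
  fin_cases i <;> fin_cases j <;> simp [productNetIn] <;> simpa using h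

lemma abs_productNetOut_le {B : ℝ} (hB : 0 ≤ B) (i : Fin 1) (j : Fin 3) :
    |productNetOut B i j| ≤ B := by
  fin_cases i; fin_cases j <;> simp [productNetOut, abs_of_nonneg hB, hB]

end Yarotsky

lemma exists_le_two_pow_of_one_le {r : ℝ} (hr : 1 ≤ r) :
    ∃ n : ℕ, r ≤ 2 ^ n ∧ (n : ℝ) ≤ 2 * Real.log r + 1 := by
  obtain ⟨n, hle, hlt⟩ := exists_nat_pow_near hr one_lt_two
  refine ⟨n + 1, hlt.le, ?_⟩
  have hlog : n * Real.log 2 ≤ Real.log r := by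
    rw [← Real.log_pow]; exact Real.log_le_log (by positivity) hle
  have := Real.log_two_gt_d9
  push_cast
  nlinarith [(n.cast_nonneg : (0 : ℝ) ≤ n)]

lemma sq_div_four_pow_le {B ε : ℝ} {n : ℕ} (hB : 0 ≤ B) (hε : 0 < ε) (hε1 : ε ≤ 1)
    (h : B / ε ≤ 2 ^ n) : B ^ 2 / 4 ^ n ≤ ε := by
  have h₁ : B ≤ ε * 2 ^ n := (div_le_iff₀' hε).mp h
  have h₂ : (4 : ℝ) ^ n = (2 ^ n) ^ 2 := by rw [← pow_mul, mul_comm, pow_mul]; norm_num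
  rw [div_le_iff₀ (by positivity), h₂]
  have : B ^ 2 ≤ (ε * 2 ^ n) ^ 2 := pow_le_pow_left₀ hB h₁ 2
  nlinarith [pow_pos (two_pos (α := ℝ)) n]

open Yarotsky in
/-- Deep ReLU (residual) networks approximate the product: there is a
universal constant `C` such that for every `B ≥ 1` and `ε ∈ (0,1)` there is a ReLU ResNet
with identity-path width `3`, block width `4`, depth at most `C log(B/ε) + C`, and all
weight magnitudes at most `C·B`, computing a function `R` with `|R(x,y) - xy| ≤ ε` on
`[-B,B]²`. -/
theorem relu_resnet_approximates_product :
    ∃ C : ℝ, 0 < C ∧ ∀ B ε : ℝ, 1 ≤ B → 0 < ε → ε < 1 →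
      ∃ (L : ℕ) (W₁ : ℕ → Matrix (Fin 4) (Fin 3) ℝ) (W₂ : ℕ → Matrix (Fin 3) (Fin 4) ℝ)
        (b₁ : ℕ → Fin 3 → ℝ) (b₂ : ℕ → Fin 4 → ℝ)
        (Ain : Matrix (Fin 3) (Fin 2) ℝ) (Bout : Matrix (Fin 1) (Fin 3) ℝ),
        (L : ℝ) ≤ C * Real.log (B / ε) + C ∧
        (∀ k i j, |W₁ k i j| ≤ C * B) ∧ (∀ k i j, |W₂ k i j| ≤ C * B) ∧
        (∀ k i, |b₁ k i| ≤ C * B) ∧ (∀ k i, |b₂ k i| ≤ C * B) ∧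
        (∀ i j, |Ain i j| ≤ C * B) ∧ (∀ i j, |Bout i j| ≤ C * B) ∧
        (∀ x y : ℝ, |x| ≤ B → |y| ≤ B →
          |(Bout.mulVec (resIter W₁ W₂ b₁ b₂ L (Ain.mulVec ![x, y]))) 0 - x * y| ≤ ε) := by
  refine ⟨16, by norm_num, fun B ε hB hε hε1 => ?_⟩
  have hr : 1 ≤ B / ε := by rw [le_div_iff₀ hε]; linarith
  obtain ⟨n, hpow, hn⟩ := exists_le_two_pow_of_one_le hr
  have hlog : 0 ≤ Real.log (B / ε) := Real.log_nonneg hr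
  have hB16 : (1 : ℝ) ≤ 16 * B := by linarith
  refine ⟨n + 1, productNetW₁, productNetW₂ B, productNetb₁, productNetb₂, productNetIn B,
    productNetOut B, ?_, fun k i j => (abs_productNetW₁_le k i j).trans hB16,
    abs_productNetW₂_le (by linarith), fun k i => (abs_productNetb₁_le k i).trans hB16,
    fun k i => (abs_productNetb₂_le k i).trans hB16,
    fun i j => (abs_productNetIn_le (by linarith) i j).trans hB16,
    fun i j => (abs_productNetOut_le (by linarith) i j).trans (by linarith),
    fun x y hx hy => ?_⟩
  · push_cast; linarith
  · exact (abs_productNet_sub_mul_le (by linarith) hx hy n).trans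
      (sq_div_four_pow_le (by linarith) hε hε1.le hpow)
end
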